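/- Let (Ω, F, P) be a probability space, p ∈ (0,1), and let (X_i)_{i∈ℕ} be independent real random variables on Ω each distributed according to the Bernoulli measure (1−p)·δ₀ + p·δ₁ on ℝ. Then for every x with 0 < x < p and every natural number m ≥ 1, P(⋃_{n ≥ m} {ω : ∑_{i=0}^{n−1} X_i(ω) ≤ n·x}) ≤ exp(−m·kl(x,p)). -/

import Mathlib

/-!
For `t = log (x / p) - log ((1 - x) / (1 - p)) ≤ 0` and `κ = -log ((1 - x) / (1 - p))`, the
factor `exp (t X_i - κ)` is the likelihood ratio of `Ber(x)` against `Ber(p)` evaluated at `X_i`,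
so it has mean one and the partial products form a nonnegative martingale. On the event
`∑_{i<n} X_i ≤ n x` the `n`-th product is at least `exp (n kl(x,p)) ≥ exp (m kl(x,p))`, and
Ville's maximal inequality bounds the probability that the martingale ever reaches this level
by `exp (-m kl(x,p))`.
-/

open MeasureTheory ProbabilityTheory Real

/-- The Bernoulli measure `(1−p)·δ₀ + p·δ₁` on `ℝ`. -/
noncomputable def bernoulliMeasureReal (p : ℝ) : Measure ℝ :=
  ENNReal.ofReal (1 - p) • Measure.dirac 0 + ENNReal.ofReal p • Measure.dirac 1

/-- The Bernoulli Kullback–Leibler divergence. -/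
noncomputable def klBer (p q : ℝ) : ℝ :=
  p * Real.log (p / q) + (1 - p) * Real.log ((1 - p) / (1 - q))

open Finset
open scoped ENNReal NNReal

theorem ville_ineq {Ω : Type*} {m0 : MeasurableSpace Ω} {μ : Measure Ω}
    [IsFiniteMeasure μ] {𝒢 : Filtration ℕ m0} {f : ℕ → Ω → ℝ} (hf : Martingale f 𝒢 μ)
    (hnonneg : 0 ≤ f) {ε : ℝ} (hε : 0 < ε) :
    μ {ω | ∃ n, ε ≤ f n ω} ≤ ENNReal.ofReal (μ[f 0] / ε) := by
  lift ε to ℝ≥0 using hε.le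
  set A : ℕ → Set Ω :=
    fun N ↦ {ω | (ε : ℝ) ≤ (range (N + 1)).sup' nonempty_range_add_one (f · ω)}
  have hA : Monotone A := by
    intro N M hNM ω hω
    simp only [A, Set.mem_ofPred_eq] at hω ⊢
    exact hω.trans <| sup'_mono _ (range_subset_range.2 (Nat.succ_le_succ hNM)) _
  have hsub : {ω | ∃ n, (ε : ℝ) ≤ f n ω} ⊆ ⋃ N, A N := fun ω ⟨n, hn⟩ ↦
    Set.mem_iUnion.2 ⟨n, hn.trans (le_sup' (f · ω) (self_mem_range_succ n))⟩
  have hbound (N : ℕ) : ε * μ (A N) ≤ ENNReal.ofReal (μ[f 0]) :=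
    calc ε * μ (A N) ≤ ENNReal.ofReal (∫ ω in A N, f N ω ∂μ) :=
          maximal_ineq hf.submartingale hnonneg N
      _ ≤ ENNReal.ofReal (μ[f N]) := ENNReal.ofReal_le_ofReal <|
        setIntegral_le_integral (hf.integrable N) (.of_forall (hnonneg N))
      _ = ENNReal.ofReal (μ[f 0]) := by
        have := hf.setIntegral_eq (Nat.zero_le N) MeasurableSet.univ
        simp_all
  have hmul : ε * μ {ω | ∃ n, (ε : ℝ) ≤ f n ω} ≤ ENNReal.ofReal (μ[f 0]) :=
    calc ε * μ {ω | ∃ n, (ε : ℝ) ≤ f n ω} ≤ ε * μ (⋃ N, A N) := by gcongr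
      _ = ⨆ N, ε * μ (A N) := by rw [hA.measure_iUnion, ENNReal.mul_iSup]
      _ ≤ _ := iSup_le hbound
  rw [ENNReal.ofReal_div_of_pos hε,
    ENNReal.le_div_iff_mul_le (.inl (by simpa using hε.ne')) (.inl (by simp)), mul_comm]
  simpa using hmul

namespace ProbabilityTheory

variable {Ω : Type*} {m0 : MeasurableSpace Ω} {μ : Measure Ω} {h : ℕ → Ω → ℝ}

lemma iIndepFun.integrable_prod_range (hind : iIndepFun h μ) (hmeas : ∀ i, Measurable (h i))
    (hint : ∀ i, Integrable (h i) μ) (n : ℕ) : Integrable (∏ i ∈ range n, h i) μ := by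
  induction n with
  | zero => have := hind.isProbabilityMeasure; exact integrable_const (1 : ℝ)
  | succ n ih =>
    rw [prod_range_succ]
    exact (hind.indepFun_prod_range_succ hmeas n).integrable_mul ih (hint n)

theorem iIndepFun.martingale_prod_range (hind : iIndepFun h μ)
    (hsm : ∀ i, StronglyMeasurable (h i)) (hint : ∀ i, Integrable (h i) μ)
    (hmean : ∀ i, μ[h i] = 1) :
    Martingale (fun n ↦ ∏ i ∈ range (n + 1), h i) (Filtration.natural h hsm) μ := by
  have := hind.isProbabilityMeasure
  have hmeas i := (hsm i).measurable
  have hadp : StronglyAdapted (Filtration.natural h hsm) fun n ↦ ∏ i ∈ range (n + 1), h i :=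
    fun n ↦ Finset.stronglyMeasurable_prod _ fun i hi ↦
      (Filtration.stronglyAdapted_natural hsm i).mono
        ((Filtration.natural h hsm).mono (Nat.lt_succ_iff.1 (mem_range.1 hi)))
  refine martingale_nat hadp (fun n ↦ hind.integrable_prod_range hmeas hint (n + 1)) fun n ↦ ?_
  have hcond : μ[h (n + 1) | Filtration.natural h hsm n] =ᵐ[μ] fun _ ↦ 1 := by
    simpa [hmean] using hind.condExp_natural_ae_eq_of_lt hsm n.lt_succ_self
  rw [prod_range_succ _ (n + 1)]
  refine (condExp_mul_of_stronglyMeasurable_left (hadp n) ?_ (hint (n + 1))).trans ?_ |>.symm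
  · simpa [prod_range_succ] using hind.integrable_prod_range hmeas hint (n + 2)
  · filter_upwards [hcond] with ω hω
    simp [hω]

end ProbabilityTheory

theorem measure_exists_sum_le_le_exp {Ω : Type*} {m0 : MeasurableSpace Ω} {μ : Measure Ω}
    {X : ℕ → Ω → ℝ} (hindep : iIndepFun X μ) (hmeas : ∀ i, Measurable (X i)) {t κ x : ℝ}
    (ht : t ≤ 0) (hint : ∀ i, Integrable (fun ω ↦ exp (t * X i ω)) μ)
    (hmgf : ∀ i, mgf (X i) μ t = exp κ) (hrate : 0 ≤ t * x - κ) (m : ℕ) :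
    μ (⋃ n ∈ {n : ℕ | m ≤ n}, {ω | ∑ i ∈ range n, X i ω ≤ n * x})
      ≤ ENNReal.ofReal (exp (-m * (t * x - κ))) := by
  have := hindep.isProbabilityMeasure
  rcases m.eq_zero_or_pos with rfl | hm
  · simpa using prob_le_one
  set h : ℕ → Ω → ℝ := fun i ω ↦ exp (t * X i ω - κ)
  have hh i : h i = fun ω ↦ exp (t * X i ω) * exp (-κ) := by
    ext ω; simp only [h, sub_eq_add_neg, exp_add]
  have hsm i : StronglyMeasurable (h i) := by fun_prop
  have hint_h i : Integrable (h i) μ := hh i ▸ (hint i).mul_const _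
  have hmean i : μ[h i] = 1 := by
    rw [hh i, integral_mul_const, ← mgf, hmgf, ← exp_add, add_neg_cancel, exp_zero]
  have hmart : Martingale (fun n ↦ ∏ i ∈ range (n + 1), h i) (Filtration.natural h hsm) μ :=
    (hindep.comp (fun _ y ↦ exp (t * y - κ)) fun _ ↦ by fun_prop).martingale_prod_range
      hsm hint_h hmean
  have hprod n ω : (∏ i ∈ range n, h i) ω = exp (t * ∑ i ∈ range n, X i ω - n * κ) := by
    simp [h, prod_apply, ← exp_sum, sum_sub_distrib, mul_sum]
  have hsub : ⋃ n ∈ {n : ℕ | m ≤ n}, {ω | ∑ i ∈ range n, X i ω ≤ n * x}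
      ⊆ {ω | ∃ n, exp (m * (t * x - κ)) ≤ (∏ i ∈ range (n + 1), h i) ω} := by
    simp only [Set.subset_def, Set.mem_iUnion, Set.mem_ofPred_eq]
    rintro ω ⟨n, hmn, hsum⟩
    obtain ⟨k, rfl⟩ := Nat.exists_eq_add_of_le' (hm.trans_le hmn)
    refine ⟨k, ?_⟩
    have hmk : (m : ℝ) ≤ (k + 1 : ℕ) := by exact_mod_cast hmn
    rw [hprod, exp_le_exp]
    calc m * (t * x - κ) ≤ (k + 1 : ℕ) * (t * x - κ) := mul_le_mul_of_nonneg_right hmk hrate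
      _ = t * ((k + 1 : ℕ) * x) - (k + 1 : ℕ) * κ := by ring
      _ ≤ t * ∑ i ∈ range (k + 1), X i ω - (k + 1 : ℕ) * κ := by
        linarith [mul_le_mul_of_nonpos_left hsum ht]
  calc _ ≤ _ := measure_mono hsub
    _ ≤ ENNReal.ofReal (μ[∏ i ∈ range (0 + 1), h i] / exp (m * (t * x - κ))) :=
      ville_ineq hmart (fun n ω ↦ by simp only [Pi.zero_apply, hprod]; positivity) (exp_pos _)
    _ = ENNReal.ofReal (exp (-m * (t * x - κ))) := by
      simp [hmean, neg_mul, exp_neg]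

lemma bernoulliMeasureReal_eq_bernoulliMeasure {p : ℝ} (hp : p ∈ unitInterval) :
    bernoulliMeasureReal p = bernoulliMeasure 1 0 ⟨p, hp⟩ := by
  rw [bernoulliMeasureReal, bernoulliMeasure_def, add_comm]
  congr 2 <;> rw [ENNReal.ofReal] <;> congr 1 <;>
    exact toNNReal_of_nonneg (by simp [hp.1, hp.2])

lemma integrable_of_map_eq_bernoulliMeasureReal {Ω : Type*} {m0 : MeasurableSpace Ω}
    {μ : Measure Ω} {Y : Ω → ℝ} (hY : Measurable Y) {p : ℝ} (hp : p ∈ unitInterval)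
    (hdist : μ.map Y = bernoulliMeasureReal p) {g : ℝ → ℝ} (hg : Measurable g) :
    Integrable (fun ω ↦ g (Y ω)) μ := by
  refine (integrable_map_measure hg.aestronglyMeasurable hY.aemeasurable).1 ?_
  rw [hdist, bernoulliMeasureReal_eq_bernoulliMeasure hp]
  exact integrable_bernoulliMeasure _ _ _ g

lemma mgf_of_map_eq_bernoulliMeasureReal {Ω : Type*} {m0 : MeasurableSpace Ω}
    {μ : Measure Ω} {Y : Ω → ℝ} (hY : Measurable Y) {p : ℝ} (hp : p ∈ unitInterval)
    (hdist : μ.map Y = bernoulliMeasureReal p) (t : ℝ) :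
    mgf Y μ t = 1 - p + p * exp t := by
  rw [← mgf_id_map hY.aemeasurable, hdist, bernoulliMeasureReal_eq_bernoulliMeasure hp, mgf,
    integral_bernoulliMeasure]
  simp only [id_eq, mul_one, smul_eq_mul, mul_zero, exp_zero]
  ring

lemma klBer_nonneg {x p : ℝ} (hx : x ∈ Set.Ioo 0 1) (hp : p ∈ Set.Ioo 0 1) :
    0 ≤ klBer x p := by
  obtain ⟨hx0, hx1⟩ := hx
  obtain ⟨hp0, hp1⟩ := hp
  have h₁ : x * (1 - p / x) ≤ x * log (x / p) := by
    gcongr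
    simpa using one_sub_inv_le_log_of_pos (div_pos hx0 hp0)
  have h₂ : (1 - x) * (1 - (1 - p) / (1 - x)) ≤ (1 - x) * log ((1 - x) / (1 - p)) := by
    gcongr
    simpa using one_sub_inv_le_log_of_pos (div_pos (sub_pos.2 hx1) (sub_pos.2 hp1))
  have : x * (1 - p / x) + (1 - x) * (1 - (1 - p) / (1 - x)) = 0 := by
    field_simp [(sub_pos.2 hx1).ne']; ring
  rw [klBer]; linarith

lemma one_sub_add_mul_exp_log_likelihood_ratio {x p : ℝ} (hx : x ∈ Set.Ioo 0 1)
    (hp : p ∈ Set.Ioo 0 1) :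
    1 - p + p * exp (log (x / p) - log ((1 - x) / (1 - p)))
      = exp (-log ((1 - x) / (1 - p))) := by
  obtain ⟨hx0, hx1⟩ := hx
  obtain ⟨hp0, hp1⟩ := hp
  have hx1' : 0 < 1 - x := sub_pos.2 hx1
  have hp1' : 0 < 1 - p := sub_pos.2 hp1
  rw [exp_sub, exp_neg, exp_log (by positivity), exp_log (by positivity)]
  field_simp
  ring

theorem bernoulli_time_uniform_concentration_general
    {Ω : Type*} [MeasurableSpace Ω] (P : Measure Ω)
    (p : ℝ) (hp : p ∈ Set.Ioo (0 : ℝ) 1) (X : ℕ → Ω → ℝ)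
    (hindep : iIndepFun X P)
    (hmeas : ∀ i, Measurable (X i))
    (hdist : ∀ i, P.map (X i) = bernoulliMeasureReal p)
    (x : ℝ) (hx : 0 < x) (hxp : x < p) (m : ℕ) :
    P (⋃ n ∈ {n : ℕ | m ≤ n}, {ω | ∑ i ∈ Finset.range n, X i ω ≤ (n : ℝ) * x})
      ≤ ENNReal.ofReal (Real.exp (-(m : ℝ) * klBer x p)) := by
  have hx' : x ∈ Set.Ioo 0 1 := ⟨hx, hxp.trans hp.2⟩
  have hp' : p ∈ unitInterval := Set.Ioo_subset_Icc_self hp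
  set a := log ((1 - x) / (1 - p))
  set b := log (x / p)
  have ha : 0 < a := log_pos <| (one_lt_div (by linarith [hp.2])).2 (by linarith)
  have hb : b < 0 := log_neg (div_pos hx hp.1) <| (div_lt_one hp.1).2 hxp
  have hrate : (b - a) * x - -a = klBer x p := by unfold klBer; ring
  have key := measure_exists_sum_le_le_exp hindep hmeas (by linarith : b - a ≤ 0)
    (fun i ↦ integrable_of_map_eq_bernoulliMeasureReal (hmeas i) hp' (hdist i)
      (g := fun y ↦ exp ((b - a) * y)) (by fun_prop))
    (fun i ↦ by rw [mgf_of_map_eq_bernoulliMeasureReal (hmeas i) hp' (hdist i),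
      one_sub_add_mul_exp_log_likelihood_ratio hx' hp])
    (hrate ▸ klBer_nonneg hx' hp) m
  rwa [hrate] at key

theorem bernoulli_time_uniform_concentration
    {Ω : Type*} [MeasurableSpace Ω] (P : Measure Ω) [IsProbabilityMeasure P]
    (p : ℝ) (hp : p ∈ Set.Ioo (0 : ℝ) 1) (X : ℕ → Ω → ℝ)
    (hindep : iIndepFun X P)
    (hmeas : ∀ i, Measurable (X i))
    (hdist : ∀ i, P.map (X i) = bernoulliMeasureReal p)
    (x : ℝ) (hx : 0 < x) (hxp : x < p) (m : ℕ) (hm : 1 ≤ m) :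
    P (⋃ n ∈ {n : ℕ | m ≤ n}, {ω | ∑ i ∈ Finset.range n, X i ω ≤ (n : ℝ) * x})
      ≤ ENNReal.ofReal (Real.exp (-(m : ℝ) * klBer x p)) :=
  bernoulli_time_uniform_concentration_general P p hp X hindep hmeas hdist x hx hxp m
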